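/- Let G be a finite bipartite graph, and let b ∈ B and w ∈ W be two nonadjacent vertices ({b, w} ∉ E). Then D(G) = Dom( D((B ∪ W) \ {b}) ∪ D((B ∪ W) \ {w}) ); that is, the maxbisize set of G equals the non-dominated pairs among the maxbisizes of G − b together with the maxbisizes of G − w. (The paper states and uses this for G the bipartite complement of a cycle, but the proof uses only the nonadjacency of b and w.) -/

import Mathlib

open Finset

/-- A finite bipartite graph: black vertices `B`, white vertices `W` (disjoint finite sets),
and an edge set `E ⊆ B × W`. -/
structure BipGraph (V : Type) [DecidableEq V] where
  B : Finset V
  W : Finset V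
  disj : Disjoint B W
  E : Set (V × V)
  E_sub : ∀ e ∈ E, e.1 ∈ B ∧ e.2 ∈ W

variable {V : Type} [DecidableEq V]

/-- `(S, T)` is a biclique of `G`. -/
def IsBiclique (G : BipGraph V) (S T : Finset V) : Prop :=
  S ⊆ G.B ∧ T ⊆ G.W ∧ ∀ b ∈ S, ∀ w ∈ T, (b, w) ∈ G.E

/-- `(b, w)` is a bisize of `G`: `G` contains a biclique of size `(b, w)`. -/
def Bisize (G : BipGraph V) (p : ℕ × ℕ) : Prop :=
  ∃ S T, IsBiclique G S T ∧ S.card = p.1 ∧ T.card = p.2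

/-- `Dominates p q` : `p` dominates `q`, i.e. `q.1 ≤ p.1` and `q.2 ≤ p.2`. -/
def Dominates (p q : ℕ × ℕ) : Prop := q.1 ≤ p.1 ∧ q.2 ≤ p.2

/-- A maxbisize of `G` : a bisize not strictly dominated by another bisize. -/
def MaxBisize (G : BipGraph V) (p : ℕ × ℕ) : Prop :=
  Bisize G p ∧ ∀ q, Bisize G q → Dominates q p → q = p

/-- `DD G` is the set of maxbisizes of `G` (denoted `D(G)` in the paper). -/
def DD (G : BipGraph V) : Set (ℕ × ℕ) := {p | MaxBisize G p}

/-- `Dom X` : the elements of `X` not strictly dominated by another element of `X`. -/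
def Dom (X : Set (ℕ × ℕ)) : Set (ℕ × ℕ) := {p ∈ X | ∀ q ∈ X, Dominates q p → q = p}

/-- The induced subgraph `G[M]`. -/
def induce (G : BipGraph V) (M : Finset V) : BipGraph V where
  B := G.B ∩ M
  W := G.W ∩ M
  disj := G.disj.mono inter_subset_left inter_subset_left
  E := {e ∈ G.E | e.1 ∈ M ∧ e.2 ∈ M}
  E_sub := fun e he =>
    ⟨mem_inter.mpr ⟨(G.E_sub e he.1).1, he.2.1⟩, mem_inter.mpr ⟨(G.E_sub e he.1).2, he.2.2⟩⟩

/-- `X` is nonadjacent to `Y` : no vertex of `X` is adjacent to a vertex of `Y`. -/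
def Nonadj (G : BipGraph V) (X Y : Finset V) : Prop :=
  ∀ x ∈ X, ∀ y ∈ Y, (x, y) ∉ G.E ∧ (y, x) ∉ G.E

/-- `X` is fully adjacent to `Y` : every black vertex of `X` is adjacent to every white
vertex of `Y` and every white vertex of `X` is adjacent to every black vertex of `Y`. -/
def FullyAdj (G : BipGraph V) (X Y : Finset V) : Prop :=
  (∀ b ∈ X ∩ G.B, ∀ w ∈ Y ∩ G.W, (b, w) ∈ G.E) ∧
  (∀ b ∈ Y ∩ G.B, ∀ w ∈ X ∩ G.W, (b, w) ∈ G.E)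

/-- `X` is left adjacent to `Y` : every black vertex of `X` is adjacent to every white
vertex of `Y` and no white vertex of `X` is adjacent to a black vertex of `Y`. -/
def LeftAdj (G : BipGraph V) (X Y : Finset V) : Prop :=
  (∀ b ∈ X ∩ G.B, ∀ w ∈ Y ∩ G.W, (b, w) ∈ G.E) ∧
  (∀ b ∈ Y ∩ G.B, ∀ w ∈ X ∩ G.W, (b, w) ∉ G.E)

open Classical in
/-- `X ⊕ Y` with the convention `∅ ⊕ X = X ⊕ ∅ = X`. -/
noncomputable def oplus (X Y : Set (ℕ × ℕ)) : Set (ℕ × ℕ) :=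
  if X = ∅ then Y else if Y = ∅ then X
  else {p | ∃ x ∈ X, ∃ y ∈ Y, p = x + y}

/-- `→_w^z X`. -/
def shiftW (z : ℕ) (X : Set (ℕ × ℕ)) : Set (ℕ × ℕ) := {p | ∃ q ∈ X, p = (q.1, q.2 + z)}

/-- `→_b^z X`. -/
def shiftB (z : ℕ) (X : Set (ℕ × ℕ)) : Set (ℕ × ℕ) := {p | ∃ q ∈ X, p = (q.1 + z, q.2)}

/-- A bimodule of `G`. -/
def Bimodule (G : BipGraph V) (M : Finset V) : Prop :=
  M ⊆ G.B ∪ G.W ∧ ∀ v ∈ (G.B ∪ G.W) \ M, Nonadj G {v} M ∨ FullyAdj G {v} M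

/-- The quotient graph of `G` by a family `M` of bimodules: vertex `(i, true)` is the
black vertex `bᵢ` (present when `Mᵢ ∩ B ≠ ∅`), `(i, false)` the white vertex `wᵢ`. -/
def quotientGraph (G : BipGraph V) {k : ℕ} (M : Fin k → Finset V) :
    BipGraph (Fin k × Bool) where
  B := Finset.univ.filter fun p => p.2 = true ∧ (M p.1 ∩ G.B).Nonempty
  W := Finset.univ.filter fun p => p.2 = false ∧ (M p.1 ∩ G.W).Nonempty
  disj := by
    rw [Finset.disjoint_left]
    intro p hp hq
    simp only [Finset.mem_filter, Finset.mem_univ, true_and] at hp hq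
    rw [hp.1] at hq
    exact Bool.noConfusion hq.1
  E := {e | e.1.2 = true ∧ e.2.2 = false ∧
       ∃ x ∈ M e.1.1 ∩ G.B, ∃ y ∈ M e.2.1 ∩ G.W, (x, y) ∈ G.E}
  E_sub := fun e he => by
    obtain ⟨h1, h2, x, hx, y, hy, _⟩ := he
    constructor <;> simp only [Finset.mem_filter, Finset.mem_univ, true_and]
    · exact ⟨h1, ⟨x, hx⟩⟩
    · exact ⟨h2, ⟨y, hy⟩⟩

/-- `Rroc S` for a set `S` of vertices of the quotient graph. -/
def Rroc (G : BipGraph V) {k : ℕ} (M : Fin k → Finset V)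
    (S : Finset (Fin k × Bool)) : Finset V :=
  S.biUnion fun p => if p.2 then M p.1 ∩ G.B else M p.1 ∩ G.W

/-- `Corr S` for a set `S` of vertices of `G`. -/
def Corr (G : BipGraph V) {k : ℕ} (M : Fin k → Finset V) (C : Finset V) :
    Finset (Fin k × Bool) :=
  Finset.univ.filter fun p =>
    if p.2 then (C ∩ M p.1 ∩ G.B).Nonempty else (C ∩ M p.1 ∩ G.W).Nonempty

/-- `C` is the vertex set of a biclique of `G`. -/
def IsBicliqueVS (G : BipGraph V) (C : Finset V) : Prop :=
  ∃ S T, IsBiclique G S T ∧ S ∪ T = C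

/-- `C` is the vertex set of a maximal biclique of `G`. -/
def MaximalBicliqueVS (G : BipGraph V) (C : Finset V) : Prop :=
  IsBicliqueVS G C ∧ ∀ D, IsBicliqueVS G D → C ⊆ D → C = D

/-- `D_C(Mᵢ)`, the maxbisize set of the bimodule `Mᵢ` with respect to a maximal
biclique `C` of the quotient graph. -/
def DC (G : BipGraph V) {k : ℕ} (M : Fin k → Finset V)
    (C : Finset (Fin k × Bool)) (i : Fin k) : Set (ℕ × ℕ) :=
  if (i, true) ∈ C then
    if (i, false) ∈ C then DD (induce G (M i))
    else {((M i ∩ G.B).card, 0)}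
  else
    if (i, false) ∈ C then {(0, (M i ∩ G.W).card)}
    else ∅

/-- `f 0 ⊕ f 1 ⊕ … ⊕ f (k-1)` (with the convention that `∅` is neutral for `⊕`). -/
noncomputable def oplusFold {k : ℕ} (f : Fin k → Set (ℕ × ℕ)) : Set (ℕ × ℕ) :=
  (List.finRange k).foldr (fun i acc => oplus (f i) acc) ∅

/-- The path on `n` vertices `0, 1, …, n-1`, two-colored alternately; the black
vertices are those whose index has parity `r`. -/
def pathGraph (n r : ℕ) : BipGraph (Fin n) where
  B := Finset.univ.filter fun i => (i : ℕ) % 2 = r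
  W := Finset.univ.filter fun i => (i : ℕ) % 2 ≠ r
  disj := by
    rw [Finset.disjoint_left]
    intro i hi hj
    simp only [Finset.mem_filter, Finset.mem_univ, true_and] at hi hj
    exact hj hi
  E := {e | (e.1 : ℕ) % 2 = r ∧ ((e.1 : ℕ) + 1 = (e.2 : ℕ) ∨ (e.2 : ℕ) + 1 = (e.1 : ℕ))}
  E_sub := fun e he => by
    obtain ⟨h1, h2⟩ := he
    refine ⟨?_, ?_⟩ <;> simp only [Finset.mem_filter, Finset.mem_univ, true_and]
    · exact h1
    · omega

/-- The cycle on `n` vertices `0, 1, …, n-1` (consecutive vertices modulo `n` adjacent),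
two-colored alternately; the black vertices are those whose index has parity `r`. -/
def cycleGraph (n r : ℕ) : BipGraph (Fin n) where
  B := Finset.univ.filter fun i => (i : ℕ) % 2 = r
  W := Finset.univ.filter fun i => (i : ℕ) % 2 ≠ r
  disj := by
    rw [Finset.disjoint_left]
    intro i hi hj
    simp only [Finset.mem_filter, Finset.mem_univ, true_and] at hi hj
    exact hj hi
  E := {e | (e.1 : ℕ) % 2 = r ∧ (e.2 : ℕ) % 2 ≠ r ∧
       (((e.1 : ℕ) + 1) % n = (e.2 : ℕ) ∨ ((e.2 : ℕ) + 1) % n = (e.1 : ℕ))}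
  E_sub := fun e he => by
    obtain ⟨h1, h2, _⟩ := he
    refine ⟨?_, ?_⟩ <;> simp only [Finset.mem_filter, Finset.mem_univ, true_and]
    · exact h1
    · exact h2

/-- The bipartite complement of `G`. -/
def bipCompl (G : BipGraph V) : BipGraph V where
  B := G.B
  W := G.W
  disj := G.disj
  E := {e | e.1 ∈ G.B ∧ e.2 ∈ G.W ∧ e ∉ G.E}
  E_sub := fun _ he => ⟨he.1, he.2.1⟩

/-- `x` and `y` are adjacent in `G`. -/
def Adjv (G : BipGraph V) (x y : V) : Prop := (x, y) ∈ G.E ∨ (y, x) ∈ G.E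

/-- `G` is twin-free: no two distinct vertices have the same set of neighbors. -/
def TwinFree (G : BipGraph V) : Prop :=
  ∀ x ∈ G.B ∪ G.W, ∀ y ∈ G.B ∪ G.W,
    ({z | Adjv G x z} = {z | Adjv G y z}) → x = y

/-- The edges of the skew star `Star_{1,2,3}`: a path `0-1-2-3-4-5` plus a vertex `6`
adjacent only to `2`. -/
def starEdges : List (ℕ × ℕ) := [(0, 1), (1, 2), (2, 3), (3, 4), (4, 5), (2, 6)]

/-- `G` contains no induced `Star_{1,2,3}`. -/
def Star123Free (G : BipGraph V) : Prop :=
  ¬ ∃ v : Fin 7 → V, Function.Injective v ∧ (∀ i, v i ∈ G.B ∪ G.W) ∧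
    ∀ i j : Fin 7, Adjv G (v i) (v j) ↔
      (((i : ℕ), (j : ℕ)) ∈ starEdges ∨ ((j : ℕ), (i : ℕ)) ∈ starEdges)

/-- Every vertex of `G` has degree at most 2 (equivalent to `K_{1,3}`-freeness for
bipartite graphs). -/
def MaxDeg2 (G : BipGraph V) : Prop :=
  ∀ x ∈ G.B ∪ G.W, ({y | Adjv G x y}).ncard ≤ 2

/-!
A biclique of `G` cannot contain both `b` and `w`, since they are not adjacent, so it survives in
`G - b` or in `G - w`; hence the bisizes of `G` are exactly those of `G - b` together with those
of `G - w`. The maximal elements of a union of two finite sets are the maximal elements among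
the maximal elements of the two sets, because every element of a finite set lies below one of
its maximal elements.
-/

section Order

variable {α : Type*} [PartialOrder α]

theorem setOf_maximal_mem_union {s t : Set α} (hs : s.Finite) (ht : t.Finite) :
    {x | Maximal (· ∈ s ∪ t) x} =
      {x | Maximal (· ∈ {y | Maximal (· ∈ s) y} ∪ {y | Maximal (· ∈ t) y}) x} := by
  have below_maximal : ∀ {y}, y ∈ s ∪ t →
      ∃ m, y ≤ m ∧ m ∈ {y | Maximal (· ∈ s) y} ∪ {y | Maximal (· ∈ t) y} := by
    rintro y (hy | hy)
    · obtain ⟨m, hym, hm⟩ := hs.exists_le_maximal hy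
      exact ⟨m, hym, Or.inl hm⟩
    · obtain ⟨m, hym, hm⟩ := ht.exists_le_maximal hy
      exact ⟨m, hym, Or.inr hm⟩
  have maximal_subset : {y | Maximal (· ∈ s) y} ∪ {y | Maximal (· ∈ t) y} ⊆ s ∪ t :=
    Set.union_subset_union (fun _ hy => hy.prop) (fun _ hy => hy.prop)
  ext x
  constructor
  · intro hx
    have hx_max : x ∈ {y | Maximal (· ∈ s) y} ∪ {y | Maximal (· ∈ t) y} :=
      hx.prop.imp (fun hxs => hx.mono Set.subset_union_left hxs)
        (fun hxt => hx.mono Set.subset_union_right hxt)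
    exact hx.mono maximal_subset hx_max
  · intro hx
    refine ⟨maximal_subset hx.prop, fun y hy hxy => ?_⟩
    obtain ⟨m, hym, hm⟩ := below_maximal hy
    exact hym.trans (hx.2 hm (hxy.trans hym))

end Order

def bisizes (G : BipGraph V) : Set (ℕ × ℕ) := {p | Bisize G p}

theorem dominates_iff_le {p q : ℕ × ℕ} : Dominates p q ↔ q ≤ p := Iff.rfl

theorem Dom_eq_setOf_maximal (X : Set (ℕ × ℕ)) : Dom X = {p | Maximal (· ∈ X) p} := by
  ext p
  simp only [Dom, Set.mem_ofPred_eq, maximal_iff, dominates_iff_le, eq_comm]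

theorem DD_eq_setOf_maximal (G : BipGraph V) : DD G = {p | Maximal (· ∈ bisizes G) p} := by
  ext p
  simp only [DD, MaxBisize, bisizes, Set.mem_ofPred_eq, maximal_iff, dominates_iff_le, eq_comm]

theorem bisizes_finite (G : BipGraph V) : (bisizes G).Finite := by
  refine (Set.finite_Iic (G.B.card, G.W.card)).subset ?_
  rintro ⟨_, _⟩ ⟨S, T, ⟨hSB, hTW, -⟩, rfl, rfl⟩
  exact Prod.mk_le_mk.mpr ⟨card_le_card hSB, card_le_card hTW⟩

theorem IsBiclique.of_induce {G : BipGraph V} {M S T : Finset V}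
    (h : IsBiclique (induce G M) S T) : IsBiclique G S T :=
  ⟨h.1.trans inter_subset_left, h.2.1.trans inter_subset_left,
    fun x hx y hy => (h.2.2 x hx y hy).1⟩

theorem IsBiclique.induce {G : BipGraph V} {M S T : Finset V} (h : IsBiclique G S T)
    (hM : S ∪ T ⊆ M) : IsBiclique (induce G M) S T :=
  ⟨subset_inter h.1 (subset_union_left.trans hM),
    subset_inter h.2.1 (subset_union_right.trans hM),
    fun x hx y hy => ⟨h.2.2 x hx y hy, hM (mem_union_left _ hx), hM (mem_union_right _ hy)⟩⟩

theorem bisizes_induce_subset (G : BipGraph V) (M : Finset V) :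
    bisizes (induce G M) ⊆ bisizes G := by
  rintro p ⟨S, T, h, hS, hT⟩
  exact ⟨S, T, h.of_induce, hS, hT⟩

theorem bisize_induce_erase {G : BipGraph V} {S T : Finset V} {v : V} (h : IsBiclique G S T)
    (hv : v ∉ S ∪ T) : Bisize (induce G ((G.B ∪ G.W).erase v)) (S.card, T.card) :=
  have hST : S ∪ T ⊆ (G.B ∪ G.W).erase v := fun _ hx =>
    mem_erase.mpr ⟨fun hxv => hv (hxv ▸ hx), union_subset_union h.1 h.2.1 hx⟩
  ⟨S, T, h.induce hST, rfl, rfl⟩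

theorem bisizes_eq_union_erase_of_notMem {G : BipGraph V} {b w : V} (hb : b ∈ G.B)
    (hw : w ∈ G.W) (hbw : (b, w) ∉ G.E) :
    bisizes G = bisizes (induce G ((G.B ∪ G.W).erase b)) ∪
      bisizes (induce G ((G.B ∪ G.W).erase w)) := by
  refine subset_antisymm ?_
    (Set.union_subset (bisizes_induce_subset _ _) (bisizes_induce_subset _ _))
  rintro ⟨_, _⟩ ⟨S, T, h, rfl, rfl⟩
  have hbT : b ∉ T := fun hbT => disjoint_left.mp G.disj hb (h.2.1 hbT)
  have hwS : w ∉ S := fun hwS => disjoint_left.mp G.disj (h.1 hwS) hw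
  by_cases hbS : b ∈ S
  · have hwT : w ∉ T := fun hwT => hbw (h.2.2 b hbS w hwT)
    exact Or.inr (bisize_induce_erase h (by simp [hwS, hwT]))
  · exact Or.inl (bisize_induce_erase h (by simp [hbS, hbT]))

/-- Theorem 20 of the paper, in the generality of its proof. -/
theorem maxbisize_remove_nonadjacent_pair {V : Type} [DecidableEq V] (G : BipGraph V)
    (b w : V) (hb : b ∈ G.B) (hw : w ∈ G.W) (hbw : (b, w) ∉ G.E) :
    DD G = Dom (DD (induce G ((G.B ∪ G.W).erase b)) ∪
                DD (induce G ((G.B ∪ G.W).erase w))) := by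
  simp only [Dom_eq_setOf_maximal, DD_eq_setOf_maximal]
  rw [bisizes_eq_union_erase_of_notMem hb hw hbw]
  exact setOf_maximal_mem_union (bisizes_finite _) (bisizes_finite _)
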